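/- arXiv:0812.1983 — 7 statements merged into one kernel-verified Lean document; each statement's English description precedes it below -/
import Mathlib

section
/- Let q ∈ ℂ with |q|>1, d ∈ ℂ*, and ν a nonzero integer. Then the operator f(z) ↦ f(qz) - d z^ν f(z) is surjective on the field ℂ((z)) of formal Laurent series. -/
/-!
Comparing coefficients, `f(qz) - d z^ν f(z) = g` says `qⁿ fₙ - d f_{n-ν} = gₙ`. Solving for the
coefficient of larger index (dividing by `qⁿ` when `ν > 0`, by `d` when `ν < 0`) turns this into a
recursion `fₙ = αₙ + βₙ f_{n-s}` with step `s = |ν| > 0`, and such a recursion, started at zero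
below the order of `g`, always defines a Laurent series.
-/

/-- The `q`-dilation operator on formal Laurent series, sending `Σ aₙ zⁿ` to `Σ aₙ qⁿ zⁿ`,
i.e. `f(z) ↦ f(qz)`. -/
noncomputable def sigmaq (q : ℂ) (f : LaurentSeries ℂ) : LaurentSeries ℂ :=
  ⟨fun n => q ^ n * f.coeff n, f.isPWO_support'.mono (fun n hn => by
    simp only [Function.mem_support] at hn ⊢
    exact fun h => hn (by rw [h, mul_zero]))⟩

noncomputable def shiftRecursion {R : Type*} [Semiring R] (α β : ℤ → R) (N : ℤ) {s : ℤ}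
    (hs : 0 < s) (n : ℤ) : R :=
  if n < N then 0 else α n + β n * shiftRecursion α β N hs (n - s)
termination_by (n - N + 1).toNat
decreasing_by omega

section ShiftRecursion

variable {R : Type*} [Semiring R] (α β : ℤ → R) (N : ℤ) {s : ℤ} (hs : 0 < s)

theorem shiftRecursion_of_lt {n : ℤ} (hn : n < N) : shiftRecursion α β N hs n = 0 := by
  rw [shiftRecursion, if_pos hn]

theorem shiftRecursion_eq (hα : ∀ n < N, α n = 0) (n : ℤ) :
    shiftRecursion α β N hs n = α n + β n * shiftRecursion α β N hs (n - s) := by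
  rcases lt_or_ge n N with hn | hn
  · rw [shiftRecursion_of_lt α β N hs hn, shiftRecursion_of_lt α β N hs (by omega), hα n hn,
      mul_zero, add_zero]
  · rw [shiftRecursion, if_neg (not_lt.mpr hn)]

end ShiftRecursion

theorem LaurentSeries.exists_coeff_eq_add_mul_coeff_sub {R : Type*} [Semiring R]
    (g : LaurentSeries R) (β : ℤ → R) {s : ℤ} (hs : 0 < s) :
    ∃ f : LaurentSeries R, ∀ n, f.coeff n = g.coeff n + β n * f.coeff (n - s) := by
  have hbdd : BddBelow (Function.support (shiftRecursion g.coeff β g.order hs)) :=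
    ⟨g.order, fun n hn => not_lt.mp fun h => hn (shiftRecursion_of_lt _ _ _ hs h)⟩
  refine ⟨HahnSeries.ofSuppBddBelow _ hbdd, fun n => ?_⟩
  simp only [HahnSeries.coeff_ofSuppBddBelow]
  exact shiftRecursion_eq _ β _ hs (fun n hn => HahnSeries.coeff_eq_zero_of_lt_order hn) n

theorem coeff_sigmaq (q : ℂ) (f : LaurentSeries ℂ) (n : ℤ) :
    (sigmaq q f).coeff n = q ^ n * f.coeff n :=
  rfl

theorem coeff_sigmaq_sub_single_mul (q d : ℂ) (ν : ℤ) (f : LaurentSeries ℂ) (n : ℤ) :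
    (sigmaq q f - HahnSeries.single ν d * f).coeff n =
      q ^ n * f.coeff n - d * f.coeff (n - ν) := by
  have hshift := HahnSeries.coeff_single_mul_add (r := d) (x := f) (a := n - ν) (b := ν)
  rw [sub_add_cancel] at hshift
  rw [HahnSeries.coeff_sub, coeff_sigmaq, hshift]

theorem sigmaq_sub_single_mul_surjective_of_pos {q : ℂ} (hq : q ≠ 0) (d : ℂ) {ν : ℤ}
    (hν : 0 < ν) :
    Function.Surjective (fun f : LaurentSeries ℂ => sigmaq q f - HahnSeries.single ν d * f) := by
  intro g
  obtain ⟨f, hf⟩ := LaurentSeries.exists_coeff_eq_add_mul_coeff_sub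
    (sigmaq q⁻¹ g) (fun n => q⁻¹ ^ n * d) hν
  refine ⟨f, HahnSeries.ext (funext fun n => ?_)⟩
  have hqn : q ^ n * q⁻¹ ^ n = 1 := by rw [inv_zpow', ← zpow_add₀ hq, add_neg_cancel, zpow_zero]
  rw [coeff_sigmaq_sub_single_mul, hf, coeff_sigmaq]
  linear_combination g.coeff n * hqn + d * f.coeff (n - ν) * hqn

theorem sigmaq_sub_single_mul_surjective_of_neg (q : ℂ) {d : ℂ} (hd : d ≠ 0) {ν : ℤ}
    (hν : ν < 0) :
    Function.Surjective (fun f : LaurentSeries ℂ => sigmaq q f - HahnSeries.single ν d * f) := by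
  intro g
  obtain ⟨f, hf⟩ := LaurentSeries.exists_coeff_eq_add_mul_coeff_sub
    (HahnSeries.single (-ν) (-d⁻¹) * g) (fun m => d⁻¹ * q ^ (m + ν)) (neg_pos.mpr hν)
  refine ⟨f, HahnSeries.ext (funext fun n => ?_)⟩
  -- the recursion at index `n - ν` expresses `f_{n-ν}` through `gₙ` and `fₙ`
  have hrec := hf (n - ν)
  rw [show n - ν = n + -ν by ring, HahnSeries.coeff_single_mul_add,
    show n + -ν - -ν = n by ring, show n + -ν + ν = n by ring] at hrec
  rw [coeff_sigmaq_sub_single_mul, show n - ν = n + -ν by ring, hrec]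
  field_simp
  ring

theorem stmt_8 (q d : ℂ) (hq : 1 < ‖q‖) (hd : d ≠ 0) (ν : ℤ) (hν : ν ≠ 0) :
    Function.Surjective
      (fun f : LaurentSeries ℂ => sigmaq q f - HahnSeries.single ν d * f) := by
  have hq0 : q ≠ 0 := by
    rintro rfl
    norm_num at hq
  rcases hν.lt_or_gt with hneg | hpos
  · exact sigmaq_sub_single_mul_surjective_of_neg q hd hneg
  · exact sigmaq_sub_single_mul_surjective_of_pos hq0 d hpos
end

section
/- Let q ∈ ℂ with |q|>1 and d ∈ ℂ*, ν ≥ 1. Then for every convergent power series g ∈ ℂ{z}, the solution f of f(qz) - d z^ν f(z) = g given by the coefficient recurrence f_n = q^{-n}(d f_{n-ν} + g_n) (with f_0,…,f_{ν-1} prescribed) is a convergent power series; hence σ_q - d z^ν : ℂ{z} → ℂ{z} is surjective. -/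
/-!
Comparing coefficients, `q ^ n f_n = g_n + d f_{n-ν}`. Since `‖q‖ ≥ 1` this gives
`‖f_n‖ ≤ ‖g_n‖ + ‖d‖ ‖f_{n-ν}‖`, and a geometric bound `‖g_n‖ ≤ C s ^ n` then propagates along the
recursion to a geometric bound on `‖f_n‖`, which is convergence. The recursion itself, solved for
`f_n` (possible as `q ≠ 0` and `ν ≥ 1`), produces a formal solution.
-/

open PowerSeries in
/-- A power series is convergent if it has a positive radius of convergence. -/
def IsConvPS (f : PowerSeries ℂ) : Prop :=
  ∃ r : ℝ, 0 < r ∧ Summable fun n : ℕ => ‖PowerSeries.coeff n f‖ * r ^ n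

open PowerSeries

lemma isConvPS_iff_exists_norm_coeff_le (f : PowerSeries ℂ) :
    IsConvPS f ↔ ∃ C s : ℝ, 0 ≤ C ∧ 1 ≤ s ∧ ∀ n, ‖coeff n f‖ ≤ C * s ^ n := by
  constructor
  · rintro ⟨r, hr, hsum⟩
    refine ⟨∑' n, ‖coeff n f‖ * r ^ n, max 1 r⁻¹, tsum_nonneg fun n => by positivity,
      le_max_left _ _, fun n => ?_⟩
    have hterm : ‖coeff n f‖ * r ^ n ≤ ∑' n, ‖coeff n f‖ * r ^ n :=
      hsum.le_tsum n fun m _ => by positivity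
    calc ‖coeff n f‖ = ‖coeff n f‖ * r ^ n * r⁻¹ ^ n := by
          rw [inv_pow, mul_inv_cancel_right₀ (pow_pos hr n).ne']
      _ ≤ (∑' n, ‖coeff n f‖ * r ^ n) * max 1 r⁻¹ ^ n := by
          gcongr
          exact le_max_right _ _
  · rintro ⟨C, s, -, hs, hbound⟩
    have hs0 : 0 < s := one_pos.trans_le hs
    refine ⟨(2 * s)⁻¹, by positivity, ?_⟩
    refine (summable_geometric_two.mul_left C).of_nonneg_of_le (fun n => by positivity) fun n => ?_
    calc ‖coeff n f‖ * (2 * s)⁻¹ ^ n ≤ C * s ^ n * (2 * s)⁻¹ ^ n := by gcongr; exact hbound n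
      _ = C * (1 / 2) ^ n := by
          rw [mul_assoc, ← mul_pow]
          congr 2
          field_simp

lemma le_mul_pow_of_le_add_mul_shift {a : ℕ → ℝ} {C s D : ℝ} {ν : ℕ} (hν : 1 ≤ ν)
    (hC : 0 ≤ C) (hs : 1 ≤ s) (hD : 0 ≤ D)
    (ha : ∀ n, a n ≤ C * s ^ n + D * (if ν ≤ n then a (n - ν) else 0)) (n : ℕ) :
    a n ≤ 2 * C * max s (2 * D) ^ n := by
  set t := max s (2 * D)
  have hst : s ≤ t := le_max_left _ _
  have ht : 0 ≤ t := zero_le_one.trans (hs.trans hst)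
  have hDt : 2 * D ≤ t ^ ν :=
    (le_max_right _ _).trans (le_self_pow₀ (hs.trans hst) (by omega))
  induction n using Nat.strong_induction_on with
  | _ n ih =>
    by_cases hn : ν ≤ n
    · have hprev := ih (n - ν) (by omega)
      have hsplit : t ^ n = t ^ ν * t ^ (n - ν) := by rw [← pow_add, Nat.add_sub_cancel' hn]
      calc a n ≤ C * s ^ n + D * a (n - ν) := by simpa [hn] using ha n
        _ ≤ C * t ^ n + D * (2 * C * t ^ (n - ν)) := by gcongr
        _ = C * t ^ n + C * t ^ (n - ν) * (2 * D) := by ring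
        _ ≤ C * t ^ n + C * t ^ (n - ν) * t ^ ν := by gcongr
        _ = 2 * C * t ^ n := by rw [hsplit]; ring
    · calc a n ≤ C * s ^ n := by simpa [hn] using ha n
        _ ≤ C * t ^ n := by gcongr
        _ ≤ 2 * C * t ^ n := by linarith [mul_nonneg hC (pow_nonneg ht n)]

lemma coeff_rescale_sub_smul_X_pow_mul (q d : ℂ) (ν n : ℕ) (f : PowerSeries ℂ) :
    coeff n (rescale q f - d • (X ^ ν * f)) =
      q ^ n * coeff n f - d * (if ν ≤ n then coeff (n - ν) f else 0) := by
  rw [map_sub, coeff_rescale, coeff_smul, coeff_X_pow_mul', smul_eq_mul]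

lemma norm_coeff_le_of_rescale_sub_smul_X_pow_mul_eq {q d : ℂ} {ν : ℕ} {f g : PowerSeries ℂ}
    (hq : 1 ≤ ‖q‖) (h : rescale q f - d • (X ^ ν * f) = g) (n : ℕ) :
    ‖coeff n f‖ ≤ ‖coeff n g‖ + ‖d‖ * (if ν ≤ n then ‖coeff (n - ν) f‖ else 0) := by
  have hn := congrArg (coeff n) h
  rw [coeff_rescale_sub_smul_X_pow_mul] at hn
  have hqn : q ^ n * coeff n f = coeff n g + d * (if ν ≤ n then coeff (n - ν) f else 0) := by
    rw [← hn]; ring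
  calc ‖coeff n f‖ ≤ ‖q‖ ^ n * ‖coeff n f‖ := le_mul_of_one_le_left (norm_nonneg _) (one_le_pow₀ hq)
    _ = ‖coeff n g + d * (if ν ≤ n then coeff (n - ν) f else 0)‖ := by rw [← hqn, norm_mul, norm_pow]
    _ ≤ ‖coeff n g‖ + ‖d‖ * (if ν ≤ n then ‖coeff (n - ν) f‖ else 0) := by
      refine (norm_add_le _ _).trans ?_
      rw [norm_mul]
      split_ifs <;> simp

lemma IsConvPS.of_rescale_sub_smul_X_pow_mul_eq {q d : ℂ} {ν : ℕ} {f g : PowerSeries ℂ}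
    (hq : 1 ≤ ‖q‖) (hν : 1 ≤ ν) (hg : IsConvPS g) (h : rescale q f - d • (X ^ ν * f) = g) :
    IsConvPS f := by
  obtain ⟨C, s, hC, hs, hgC⟩ := (isConvPS_iff_exists_norm_coeff_le g).mp hg
  refine (isConvPS_iff_exists_norm_coeff_le f).mpr
    ⟨2 * C, max s (2 * ‖d‖), by positivity, hs.trans (le_max_left _ _), ?_⟩
  refine le_mul_pow_of_le_add_mul_shift hν hC hs (norm_nonneg d) fun n => ?_
  exact (norm_coeff_le_of_rescale_sub_smul_X_pow_mul_eq hq h n).trans (by gcongr; exact hgC n)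

noncomputable def qDiffSolCoeff (q d : ℂ) (ν : ℕ) (g : ℕ → ℂ) (n : ℕ) : ℂ :=
  if 0 < ν ∧ ν ≤ n then (g n + d * qDiffSolCoeff q d ν g (n - ν)) / q ^ n
  else g n / q ^ n
termination_by n
decreasing_by omega

lemma rescale_sub_smul_X_pow_mul_mk_qDiffSolCoeff {q : ℂ} (d : ℂ) {ν : ℕ} (hq : q ≠ 0)
    (hν : 1 ≤ ν) (g : PowerSeries ℂ) :
    rescale q (mk (qDiffSolCoeff q d ν (coeff · g)))
      - d • (X ^ ν * mk (qDiffSolCoeff q d ν (coeff · g))) = g := by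
  ext n
  rw [coeff_rescale_sub_smul_X_pow_mul, coeff_mk, qDiffSolCoeff]
  have hqn : q ^ n ≠ 0 := pow_ne_zero n hq
  by_cases hn : ν ≤ n
  · rw [if_pos ⟨hν, hn⟩, if_pos hn, coeff_mk]
    field_simp
    ring
  · rw [if_neg (by omega), if_neg hn]
    field_simp
    ring

open PowerSeries in
theorem stmt_9_general (q d : ℂ) (hq : 1 < ‖q‖) (ν : ℕ) (hν : 1 ≤ ν)
    (g : PowerSeries ℂ) (hg : IsConvPS g) :
    (∀ f : PowerSeries ℂ, rescale q f - d • (X ^ ν * f) = g → IsConvPS f) ∧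
    (∃ f : PowerSeries ℂ, IsConvPS f ∧ rescale q f - d • (X ^ ν * f) = g) := by
  have hq0 : q ≠ 0 := norm_pos_iff.mp (one_pos.trans hq)
  have hconv (f : PowerSeries ℂ) (hf : rescale q f - d • (X ^ ν * f) = g) : IsConvPS f :=
    .of_rescale_sub_smul_X_pow_mul_eq hq.le hν hg hf
  have hsol := rescale_sub_smul_X_pow_mul_mk_qDiffSolCoeff d hq0 hν g
  exact ⟨hconv, _, hconv _ hsol, hsol⟩

open PowerSeries in
theorem stmt_9 (q d : ℂ) (hq : 1 < ‖q‖) (hd : d ≠ 0) (ν : ℕ) (hν : 1 ≤ ν)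
    (g : PowerSeries ℂ) (hg : IsConvPS g) :
    (∀ f : PowerSeries ℂ, rescale q f - d • (X ^ ν * f) = g → IsConvPS f) ∧
    (∃ f : PowerSeries ℂ, IsConvPS f ∧ rescale q f - d • (X ^ ν * f) = g) :=
  stmt_9_general q d hq ν hν g hg
end

section
/- Let q ∈ ℂ with |q|>1. A formal power series Σ φ_n z^n is q-Gevrey of level 1 whenever there exist A, C > 0 with |φ_n| ≤ C A^n |q|^{-n(n-1)/2}. If φ is q-Gevrey of level 1 and φ(1) = 0 (i.e. Σ_n φ_n = 0), then the series γ with γ_n = Σ_{k ≤ n} φ_k, which satisfies (1-z)γ(z) = φ(z), is also q-Gevrey of level 1. -/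
/-!
Since `φ(1) = 0`, the partial sum `γ n` is minus the tail `∑_{k > n} φ k`. The weight
`w n = A ^ n / r ^ (n choose 2)` is submultiplicative, `w (n + m) ≤ w n * w m`, because
`n choose 2` is superadditive, so the tail is bounded by `C * w n * ∑_{m ≥ 1} w m`, and this
series converges by the ratio test, the ratio `A / r ^ m` tending to `0` for `r > 1`.
-/

open Finset Filter Topology

theorem Nat.choose_two_add_choose_two_le (m n : ℕ) :
    m.choose 2 + n.choose 2 ≤ (m + n).choose 2 := by
  rw [Nat.add_choose_eq, Nat.sum_antidiagonal_eq_sum_range_succ_mk]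
  simp only [sum_range_succ, sum_range_zero, Nat.reduceSub, Nat.choose_zero_right,
    Nat.choose_one_right]
  omega

theorem Nat.succ_choose_two (m : ℕ) : (m + 1).choose 2 = m.choose 2 + m := by
  rw [Nat.choose_succ_succ', Nat.choose_one_right, add_comm]

noncomputable def gevreyWeight (A r : ℝ) (n : ℕ) : ℝ := A ^ n / r ^ n.choose 2

section
variable {A r : ℝ}

theorem gevreyWeight_pos (hA : 0 < A) (hr : 0 < r) (n : ℕ) : 0 < gevreyWeight A r n := by
  unfold gevreyWeight; positivity

theorem gevreyWeight_succ (hr : r ≠ 0) (n : ℕ) :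
    gevreyWeight A r (n + 1) = gevreyWeight A r n * (A / r ^ n) := by
  simp only [gevreyWeight, Nat.succ_choose_two, pow_succ, pow_add]
  field_simp

theorem gevreyWeight_add_le (hA : 0 ≤ A) (hr : 1 ≤ r) (m n : ℕ) :
    gevreyWeight A r (m + n) ≤ gevreyWeight A r m * gevreyWeight A r n := by
  rw [gevreyWeight, gevreyWeight, gevreyWeight, div_mul_div_comm, ← pow_add, ← pow_add]
  gcongr
  exact Nat.choose_two_add_choose_two_le m n

theorem summable_gevreyWeight (hA : 0 < A) (hr : 1 < r) : Summable (gevreyWeight A r) := by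
  have hr0 : 0 < r := one_pos.trans hr
  refine summable_of_ratio_test_tendsto_lt_one one_pos
    (Eventually.of_forall fun n => (gevreyWeight_pos hA hr0 n).ne') ?_
  have hratio : ∀ n, ‖gevreyWeight A r (n + 1)‖ / ‖gevreyWeight A r n‖ = A * r⁻¹ ^ n := by
    intro n
    rw [Real.norm_of_nonneg (gevreyWeight_pos hA hr0 _).le,
      Real.norm_of_nonneg (gevreyWeight_pos hA hr0 _).le, gevreyWeight_succ hr0.ne',
      mul_div_cancel_left₀ _ (gevreyWeight_pos hA hr0 n).ne', inv_pow, div_eq_mul_inv]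
  simp only [hratio]
  simpa using (tendsto_pow_atTop_nhds_zero_of_lt_one (by positivity)
    (inv_lt_one_of_one_lt₀ hr)).const_mul A

end

theorem norm_sum_range_le_of_hasSum_zero {E : Type*} [NormedAddCommGroup E] [CompleteSpace E]
    {f : ℕ → E} {b : ℕ → ℝ} (hf : HasSum f 0) (hfb : ∀ k, ‖f k‖ ≤ b k) (hb : Summable b)
    (n : ℕ) : ‖∑ k ∈ range n, f k‖ ≤ ∑' i, b (i + n) := by
  have htail : ∑ k ∈ range n, f k = -∑' i, f (i + n) := by
    refine eq_neg_of_add_eq_zero_left ?_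
    rw [hf.summable.sum_add_tsum_nat_add n, hf.tsum_eq]
  have hb' : Summable fun i => b (i + n) := (summable_nat_add_iff n).2 hb
  rw [htail, norm_neg]
  exact tsum_of_norm_bounded hb'.hasSum fun i => hfb (i + n)

theorem stmt_10 (q : ℂ) (hq : 1 < ‖q‖) (φ : ℕ → ℂ) (C A : ℝ) (hC : 0 < C) (hA : 0 < A)
    (hφ : ∀ n : ℕ, ‖φ n‖ ≤ C * A ^ n / ‖q‖ ^ (n * (n - 1) / 2))
    (hsum : HasSum φ 0) :
    ∃ C' : ℝ, 0 < C' ∧ ∀ n : ℕ,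
      ‖∑ k ∈ Finset.range (n + 1), φ k‖ ≤ C' * A ^ n / ‖q‖ ^ (n * (n - 1) / 2) := by
  set w := gevreyWeight A ‖q‖
  have hw : Summable w := summable_gevreyWeight hA hq
  have hφw : ∀ k, ‖φ k‖ ≤ C * w k := fun k => by
    simpa only [w, gevreyWeight, Nat.choose_two_right, mul_div_assoc] using hφ k
  have hw_pos : ∀ k, 0 < w k := gevreyWeight_pos hA (one_pos.trans hq)
  have hw_shift : Summable fun i => w (i + 1) := (summable_nat_add_iff 1).2 hw
  set S := ∑' i, w (i + 1)
  have hS : 0 < S := hw_shift.tsum_pos (fun i => (hw_pos _).le) 0 (hw_pos _)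
  refine ⟨C * S, mul_pos hC hS, fun n => ?_⟩
  have htail : ∀ i, C * w (i + (n + 1)) ≤ C * w n * w (i + 1) := fun i => by
    rw [mul_assoc, show i + (n + 1) = n + (i + 1) by omega]
    exact mul_le_mul_of_nonneg_left (gevreyWeight_add_le hA.le hq.le n (i + 1)) hC.le
  calc ‖∑ k ∈ range (n + 1), φ k‖
      ≤ ∑' i, C * w (i + (n + 1)) := norm_sum_range_le_of_hasSum_zero hsum hφw (hw.mul_left C) _
    _ ≤ ∑' i, C * w n * w (i + 1) :=
        ((summable_nat_add_iff _).2 (hw.mul_left C)).tsum_le_tsum htail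
          (hw_shift.mul_left _)
    _ = C * S * A ^ n / ‖q‖ ^ (n * (n - 1) / 2) := by
        rw [tsum_mul_left, ← Nat.choose_two_right]
        show C * (A ^ n / ‖q‖ ^ n.choose 2) * S = _
        ring
end

section
/- Let q ∈ ℂ with |q|>1. In the convergent case, the cokernel of the ℂ-linear operator f(z) ↦ f(qz) - z^{-1} f(z) on ℂ({z}) (convergent Laurent series) has dimension 1. -/
/-- A formal Laurent series is convergent (meromorphic at 0) if its power series part
has positive radius of convergence (the principal part is automatically finite). -/
def IsConvL (f : LaurentSeries ℂ) : Prop :=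
  ∃ r : ℝ, 0 < r ∧ Summable fun n : ℕ => ‖f.coeff (n : ℤ)‖ * r ^ n

def tri (k : ℤ) : ℤ := k * (k + 1) / 2

lemma two_mul_tri (k : ℤ) : 2 * tri k = k * (k + 1) := by
  obtain ⟨m, hm⟩ := Int.even_mul_succ_self k
  rw [tri, hm, ← two_mul, Int.mul_ediv_cancel_left _ two_ne_zero]

lemma tri_sub_one_add (k : ℤ) : tri (k - 1) + k = tri k := by
  have h₁ := two_mul_tri k
  have h₂ := two_mul_tri (k - 1)
  linarith

lemma add_tri_le_tri_sub_tri (n i : ℕ) : (n : ℤ) + tri i ≤ tri (n + i) - tri (n - 1) := by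
  have h₁ := two_mul_tri (n + i)
  have h₂ := two_mul_tri (n - 1)
  have h₃ := two_mul_tri i
  nlinarith [mul_nonneg (Int.natCast_nonneg n) (Int.natCast_nonneg i)]

lemma summable_pow_mul_zpow_neg_tri {A : ℝ} (hA : 1 < A) (ρ : ℝ) :
    Summable fun n : ℕ => ρ ^ n * A ^ (-tri n) := by
  have hA₀ : A ≠ 0 := (one_pos.trans hA).ne'
  have hratio : Filter.Tendsto (fun n : ℕ => ‖ρ‖ * A⁻¹ ^ (n + 1)) Filter.atTop (nhds 0) := by
    simpa using ((tendsto_pow_atTop_nhds_zero_of_lt_one (inv_nonneg.2 (one_pos.trans hA).le)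
      (inv_lt_one_of_one_lt₀ hA)).comp (Filter.tendsto_add_atTop_nat 1)).const_mul ‖ρ‖
  refine summable_of_ratio_norm_eventually_le (r := 1 / 2) (by norm_num) ?_
  filter_upwards [hratio.eventually (ge_mem_nhds (by norm_num : (0 : ℝ) < 1 / 2))] with n hn
  have hstep : ρ ^ (n + 1) * A ^ (-tri (n + 1 : ℕ)) =
      (ρ * A⁻¹ ^ (n + 1)) * (ρ ^ n * A ^ (-tri n)) := by
    rw [← tri_sub_one_add, Nat.cast_add_one, add_sub_cancel_right, neg_add, zpow_add₀ hA₀,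
      zpow_neg A ((n : ℤ) + 1), ← inv_zpow, ← Nat.cast_add_one, zpow_natCast, pow_succ]
    ring
  rw [hstep, norm_mul (ρ * _), norm_mul ρ, norm_pow, norm_inv,
    Real.norm_of_nonneg (one_pos.trans hA).le]
  exact mul_le_mul_of_nonneg_right hn (norm_nonneg _)

lemma coeff_single_neg_one_mul (f : LaurentSeries ℂ) (n : ℤ) :
    (HahnSeries.single (-1 : ℤ) (1 : ℂ) * f).coeff n = f.coeff (n + 1) := by
  simpa using HahnSeries.coeff_single_mul_add (r := (1 : ℂ)) (x := f) (a := n + 1) (b := -1)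

lemma isConvL_iff_exists_norm_coeff_le {f : LaurentSeries ℂ} :
    IsConvL f ↔ ∃ C ρ : ℝ, 0 < ρ ∧ ∀ n : ℕ, ‖f.coeff n‖ ≤ C * ρ ^ n := by
  constructor
  · rintro ⟨r, hr, hs⟩
    refine ⟨∑' n : ℕ, ‖f.coeff n‖ * r ^ n, r⁻¹, inv_pos.2 hr, fun n => ?_⟩
    rw [inv_pow, ← div_eq_mul_inv, le_div_iff₀ (pow_pos hr n)]
    exact hs.le_tsum n fun j _ => by positivity
  · rintro ⟨C, ρ, hρ, hC⟩
    refine ⟨(2 * ρ)⁻¹, by positivity, ?_⟩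
    refine Summable.of_nonneg_of_le (fun n => by positivity) (fun n => ?_)
      ((summable_geometric_two).mul_left C)
    calc ‖f.coeff n‖ * (2 * ρ)⁻¹ ^ n ≤ C * ρ ^ n * (2 * ρ)⁻¹ ^ n :=
          mul_le_mul_of_nonneg_right (hC n) (by positivity)
      _ = C * (1 / 2) ^ n := by
          rw [mul_assoc, ← mul_pow]
          congr 2
          field_simp

namespace IsConvL

variable {f g : LaurentSeries ℂ}

lemma sub (hf : IsConvL f) (hg : IsConvL g) : IsConvL (f - g) := by
  obtain ⟨C₁, ρ₁, hρ₁, h₁⟩ := isConvL_iff_exists_norm_coeff_le.1 hf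
  obtain ⟨C₂, ρ₂, hρ₂, h₂⟩ := isConvL_iff_exists_norm_coeff_le.1 hg
  refine isConvL_iff_exists_norm_coeff_le.2
    ⟨C₁ + C₂, max ρ₁ ρ₂, lt_max_of_lt_left hρ₁, fun n => ?_⟩
  have hC₁ : 0 ≤ C₁ := by simpa using (norm_nonneg _).trans (h₁ 0)
  have hC₂ : 0 ≤ C₂ := by simpa using (norm_nonneg _).trans (h₂ 0)
  calc ‖(f - g).coeff n‖ ≤ C₁ * ρ₁ ^ n + C₂ * ρ₂ ^ n :=
        (norm_sub_le _ _).trans (add_le_add (h₁ n) (h₂ n))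
    _ ≤ C₁ * max ρ₁ ρ₂ ^ n + C₂ * max ρ₁ ρ₂ ^ n := by
        gcongr
        exacts [le_max_left _ _, le_max_right _ _]
    _ = (C₁ + C₂) * max ρ₁ ρ₂ ^ n := by ring

lemma smul (hf : IsConvL f) (c : ℂ) : IsConvL (c • f) := by
  obtain ⟨C, ρ, hρ, h⟩ := isConvL_iff_exists_norm_coeff_le.1 hf
  refine isConvL_iff_exists_norm_coeff_le.2 ⟨‖c‖ * C, ρ, hρ, fun n => ?_⟩
  rw [HahnSeries.coeff_smul, norm_smul, mul_assoc]
  exact mul_le_mul_of_nonneg_left (h n) (norm_nonneg c)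

lemma sigmaq (hf : IsConvL f) (q : ℂ) : IsConvL (sigmaq q f) := by
  obtain ⟨C, ρ, hρ, h⟩ := isConvL_iff_exists_norm_coeff_le.1 hf
  refine isConvL_iff_exists_norm_coeff_le.2
    ⟨C, (‖q‖ + 1) * ρ, by positivity, fun n => ?_⟩
  have hCρ : 0 ≤ C * ρ ^ n := (norm_nonneg _).trans (h n)
  calc ‖q ^ (n : ℤ) * f.coeff n‖ ≤ ‖q‖ ^ n * (C * ρ ^ n) := by
        rw [norm_mul, norm_zpow, zpow_natCast]
        exact mul_le_mul_of_nonneg_left (h n) (by positivity)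
    _ ≤ (‖q‖ + 1) ^ n * (C * ρ ^ n) := by gcongr; linarith
    _ = C * ((‖q‖ + 1) * ρ) ^ n := by rw [mul_pow]; ring

lemma single_neg_one_mul (hf : IsConvL f) :
    IsConvL (HahnSeries.single (-1 : ℤ) (1 : ℂ) * f) := by
  obtain ⟨C, ρ, hρ, h⟩ := isConvL_iff_exists_norm_coeff_le.1 hf
  refine isConvL_iff_exists_norm_coeff_le.2 ⟨C * ρ, ρ, hρ, fun n => ?_⟩
  rw [coeff_single_neg_one_mul, mul_assoc, ← pow_succ']
  exact_mod_cast h (n + 1)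

end IsConvL

lemma isConvL_one : IsConvL 1 :=
  isConvL_iff_exists_norm_coeff_le.2 ⟨1, 1, one_pos, fun n => by
    rw [HahnSeries.coeff_one]; split_ifs <;> simp⟩

/-- The `q`-Borel transform `Σ gₖ q^(-k(k+1)/2) ξᵏ` of `g`, evaluated at `ξ = 1`. -/
noncomputable def qBorelAtOne (q : ℂ) (g : LaurentSeries ℂ) : ℂ :=
  ∑' k : ℤ, g.coeff k * q ^ (-tri k)

section qBorelAtOne

variable {q : ℂ} {f g : LaurentSeries ℂ}

lemma IsConvL.summable_coeff_mul_zpow_neg_tri (hq : 1 < ‖q‖) (hg : IsConvL g) :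
    Summable fun k : ℤ => g.coeff k * q ^ (-tri k) := by
  obtain ⟨C, ρ, -, h⟩ := isConvL_iff_exists_norm_coeff_le.1 hg
  refine summable_int_iff_summable_nat_and_neg.2 ⟨?_, ?_⟩
  · refine Summable.of_norm_bounded ((summable_pow_mul_zpow_neg_tri hq ρ).mul_left C) fun n => ?_
    rw [norm_mul, norm_zpow, ← mul_assoc]
    exact mul_le_mul_of_nonneg_right (h n) (by positivity)
  · refine summable_of_ne_finset_zero (s := Finset.range ((-g.order).toNat + 1)) fun n hn => ?_
    rw [HahnSeries.coeff_eq_zero_of_lt_order (by simp at hn; omega), zero_mul]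

lemma qBorelAtOne_add (hq : 1 < ‖q‖) (hf : IsConvL f) (hg : IsConvL g) :
    qBorelAtOne q (f + g) = qBorelAtOne q f + qBorelAtOne q g := by
  simp only [qBorelAtOne, HahnSeries.coeff_add, add_mul]
  exact (hf.summable_coeff_mul_zpow_neg_tri hq).tsum_add (hg.summable_coeff_mul_zpow_neg_tri hq)

lemma qBorelAtOne_sub (hq : 1 < ‖q‖) (hf : IsConvL f) (hg : IsConvL g) :
    qBorelAtOne q (f - g) = qBorelAtOne q f - qBorelAtOne q g := by
  simp only [qBorelAtOne, HahnSeries.coeff_sub, sub_mul]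
  exact (hf.summable_coeff_mul_zpow_neg_tri hq).tsum_sub (hg.summable_coeff_mul_zpow_neg_tri hq)

lemma qBorelAtOne_smul (c : ℂ) (f : LaurentSeries ℂ) :
    qBorelAtOne q (c • f) = c * qBorelAtOne q f := by
  simp only [qBorelAtOne, HahnSeries.coeff_smul, smul_eq_mul, mul_assoc, tsum_mul_left]

lemma qBorelAtOne_one : qBorelAtOne q 1 = 1 := by
  rw [qBorelAtOne, tsum_eq_single 0 fun k hk => by simp [HahnSeries.coeff_one, hk]]
  simp [tri]

lemma qBorelAtOne_sigmaq (hq : q ≠ 0) (f : LaurentSeries ℂ) :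
    qBorelAtOne q (sigmaq q f) = qBorelAtOne q (HahnSeries.single (-1 : ℤ) (1 : ℂ) * f) := by
  have hshift := (Equiv.addRight (1 : ℤ)).tsum_eq fun k => f.coeff k * q ^ (-tri (k - 1))
  simp only [Equiv.coe_addRight, add_sub_cancel_right] at hshift
  simp only [qBorelAtOne, coeff_single_neg_one_mul, hshift]
  refine tsum_congr fun k => ?_
  rw [← tri_sub_one_add k, neg_add, zpow_add₀ hq, zpow_neg q k]
  change q ^ k * f.coeff k * _ = _
  field_simp

lemma qBorelAtOne_smul_one_add (hq : 1 < ‖q‖) (hf : IsConvL f) (c : ℂ) :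
    qBorelAtOne q (c • 1 + (sigmaq q f - HahnSeries.single (-1 : ℤ) 1 * f)) = c := by
  have hq₀ : q ≠ 0 := norm_pos_iff.1 (one_pos.trans hq)
  rw [qBorelAtOne_add hq (isConvL_one.smul c) ((hf.sigmaq q).sub hf.single_neg_one_mul),
    qBorelAtOne_sub hq (hf.sigmaq q) hf.single_neg_one_mul, qBorelAtOne_sigmaq hq₀,
    qBorelAtOne_smul, qBorelAtOne_one, sub_self, mul_one, add_zero]

end qBorelAtOne

lemma tsum_int_add_nat_eq_add {E : Type*} [NormedAddCommGroup E] [CompleteSpace E] {a : ℤ → E}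
    (ha : Summable a) (n : ℤ) :
    ∑' i : ℕ, a (n + i) = a n + ∑' i : ℕ, a (n + 1 + i) := by
  have h := (ha.comp_injective (i := fun i : ℕ => n + i)
    fun x y hxy => by simpa using hxy).tsum_eq_zero_add
  simp only [Function.comp_apply, Nat.cast_zero, add_zero, Nat.cast_succ] at h
  rw [h]
  congr 1
  exact tsum_congr fun i => by rw [add_right_comm, add_assoc n]

lemma tsum_int_add_nat_eq_tsum {E : Type*} [AddCommMonoid E] [TopologicalSpace E] {a : ℤ → E}
    {n : ℤ} (h : ∀ k < n, a k = 0) :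
    ∑' i : ℕ, a (n + i) = ∑' k, a k :=
  Function.Injective.tsum_eq (fun x y hxy => by simpa using hxy) fun k hk =>
    ⟨(k - n).toNat, by have := mt (h k) hk; simp only; omega⟩

section Solution

variable {q : ℂ} {G : LaurentSeries ℂ}

lemma norm_zpow_tri_mul_tsum_le (hq : 1 < ‖q‖) {C ρ : ℝ}
    (hG : ∀ n : ℕ, ‖G.coeff n‖ ≤ C * ρ ^ n) (n : ℕ) :
    ‖q ^ tri ((n : ℤ) - 1) * ∑' i : ℕ, G.coeff (n + i) * q ^ (-tri (n + i))‖ ≤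
      C * (∑' i : ℕ, ρ ^ i * ‖q‖ ^ (-tri i)) * (ρ / ‖q‖) ^ n := by
  have hq₀ : ‖q‖ ≠ 0 := (one_pos.trans hq).ne'
  rw [← tsum_mul_left]
  refine (tsum_of_norm_bounded ((summable_pow_mul_zpow_neg_tri hq ρ).hasSum.mul_left
    (C * (ρ / ‖q‖) ^ n)) fun i => ?_).trans_eq (by ring)
  have hcoeff : ‖G.coeff (n + i)‖ ≤ C * ρ ^ (n + i) := mod_cast hG (n + i)
  have hexp : ‖q‖ ^ tri ((n : ℤ) - 1) * ‖q‖ ^ (-tri (n + i)) ≤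
      ‖q‖ ^ (-n : ℤ) * ‖q‖ ^ (-tri i) := by
    rw [← zpow_add₀ hq₀, ← zpow_add₀ hq₀]
    exact zpow_le_zpow_right₀ hq.le (by linarith [add_tri_le_tri_sub_tri n i])
  calc ‖q ^ tri ((n : ℤ) - 1) * (G.coeff (n + i) * q ^ (-tri (n + i)))‖
      = ‖G.coeff (n + i)‖ * (‖q‖ ^ tri ((n : ℤ) - 1) * ‖q‖ ^ (-tri (n + i))) := by
        rw [norm_mul, norm_mul, norm_zpow, norm_zpow]; ring
    _ ≤ C * ρ ^ (n + i) * (‖q‖ ^ (-n : ℤ) * ‖q‖ ^ (-tri i)) :=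
        mul_le_mul hcoeff hexp (by positivity) ((norm_nonneg _).trans hcoeff)
    _ = C * (ρ / ‖q‖) ^ n * (ρ ^ i * ‖q‖ ^ (-tri i)) := by
        rw [zpow_neg, zpow_natCast, div_pow, pow_add]; ring

lemma exists_isConvL_sigmaq_sub_eq (hq : 1 < ‖q‖) (hG : IsConvL G)
    (h₀ : qBorelAtOne q G = 0) :
    ∃ f, IsConvL f ∧ sigmaq q f - HahnSeries.single (-1 : ℤ) 1 * f = G := by
  have hq₀ : q ≠ 0 := norm_pos_iff.1 (one_pos.trans hq)
  set a : ℤ → ℂ := fun k => G.coeff k * q ^ (-tri k) with ha_def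
  have ha : Summable a := hG.summable_coeff_mul_zpow_neg_tri hq
  set F : ℤ → ℂ := fun n => q ^ tri (n - 1) * ∑' i : ℕ, a (n + i) with hF_def
  have hF : BddBelow (Function.support F) := by
    refine ⟨G.order, fun n hn => not_lt.1 fun hlt => hn ?_⟩
    have hvanish : ∀ k < n, a k = 0 := fun k hk => by
      show G.coeff k * _ = 0
      rw [HahnSeries.coeff_eq_zero_of_lt_order (hk.trans hlt), zero_mul]
    exact mul_eq_zero_of_right _ ((tsum_int_add_nat_eq_tsum hvanish).trans h₀)
  refine ⟨HahnSeries.ofSuppBddBelow F hF, ?_, ?_⟩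
  · obtain ⟨C, ρ, hρ, hCρ⟩ := isConvL_iff_exists_norm_coeff_le.1 hG
    exact isConvL_iff_exists_norm_coeff_le.2 ⟨_, ρ / ‖q‖, by positivity,
      norm_zpow_tri_mul_tsum_le hq hCρ⟩
  · ext n
    rw [HahnSeries.coeff_sub, coeff_single_neg_one_mul]
    change q ^ n * F n - F (n + 1) = G.coeff n
    calc q ^ n * F n - F (n + 1)
        = q ^ tri n * (∑' i : ℕ, a (n + i) - ∑' i : ℕ, a (n + 1 + i)) := by
          simp only [hF_def, add_sub_cancel_right]
          rw [← tri_sub_one_add n, zpow_add₀ hq₀]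
          ring
      _ = q ^ tri n * a n := by rw [tsum_int_add_nat_eq_add ha n, add_sub_cancel_right]
      _ = G.coeff n := by
          rw [ha_def, mul_left_comm, ← zpow_add₀ hq₀, add_neg_cancel, zpow_zero, mul_one]

end Solution

theorem stmt_12 (q : ℂ) (hq : 1 < ‖q‖) :
    ∃ w : LaurentSeries ℂ, IsConvL w ∧
      (∀ f : LaurentSeries ℂ, IsConvL f →
        IsConvL (sigmaq q f - HahnSeries.single (-1 : ℤ) 1 * f)) ∧
      (∀ g : LaurentSeries ℂ, IsConvL g → ∃! c : ℂ, ∃ f : LaurentSeries ℂ,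
        IsConvL f ∧ g = c • w + (sigmaq q f - HahnSeries.single (-1 : ℤ) 1 * f)) := by
  refine ⟨1, isConvL_one, fun f hf => (hf.sigmaq q).sub hf.single_neg_one_mul, fun g hg => ?_⟩
  have hone := isConvL_one.smul (qBorelAtOne q g)
  obtain ⟨f, hf, hLf⟩ := exists_isConvL_sigmaq_sub_eq hq (hg.sub hone) (by
    rw [qBorelAtOne_sub hq hg hone, qBorelAtOne_smul, qBorelAtOne_one, mul_one, sub_self])
  refine ⟨qBorelAtOne q g, ⟨f, hf, by rw [hLf, add_sub_cancel]⟩, ?_⟩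
  rintro c ⟨f', hf', rfl⟩
  exact (qBorelAtOne_smul_one_add hq hf' c).symm
end

section
/- Let q ∈ ℂ with |q|>1 and suppose the q-difference operator P = Σ_{i=0}^n a_i σ_q^i has holomorphic coefficients a_i = Σ_j a_{i,j} z^j with a_0 a_n ≠ 0, slope 0 on its Newton polygon with characteristic polynomial F_0(X) = Σ_i a_{i,0} X^i satisfying F_0(1) = 0 and F_0(q^m) ≠ 0 for all m ≥ 1. Then there is a unique formal power series f with f(0)=1 such that Σ_i a_i(z) f(q^i z) = 0. -/
/-!
Comparing coefficients of `z^l` turns `P.f = 0` into the triangular system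
`Σ_{j+m=l} F_j(q^m) f_m = 0`. Its diagonal coefficient `F_0(q^l)` vanishes for `l = 0`, which makes
`f_0` free, and is nonzero for `l ≥ 1`, which determines each `f_l` from `f_0, …, f_{l-1}`.
-/

open PowerSeries Finset

variable {K : Type*} [Field K]

/-- `F_j(q^m)`, where `F_j(X) = Σ_i a_{i,j} X^i`. -/
noncomputable def charValue (n : ℕ) (a : ℕ → K⟦X⟧) (q : K) (j m : ℕ) : K :=
  ∑ i ∈ range (n + 1), coeff j (a i) * q ^ (i * m)

theorem coeff_sum_mul_rescale_pow (n : ℕ) (a : ℕ → K⟦X⟧) (q : K) (f : K⟦X⟧) (l : ℕ) :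
    coeff l (∑ i ∈ range (n + 1), a i * rescale (q ^ i) f) =
      ∑ p ∈ antidiagonal l, charValue n a q p.1 p.2 * coeff p.2 f := by
  simp only [map_sum, coeff_mul, coeff_rescale, charValue, sum_mul]
  rw [sum_comm]
  refine sum_congr rfl fun p _ => sum_congr rfl fun i _ => ?_
  rw [← pow_mul]
  ring

section Triangular

variable (g : ℕ → ℕ → K)

/-- The solution of `Σ_{j+m=l} g j m * c m = 0` normalised by `c 0 = 1`. -/
noncomputable def triangularSol : ℕ → K
  | 0 => 1
  | l + 1 => -(∑ k ∈ range (l + 1), g (k + 1) (l - k) * triangularSol (l - k)) / g 0 (l + 1)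
decreasing_by exact Nat.lt_succ_of_le (Nat.sub_le l k)

theorem sum_antidiagonal_succ_mul (c : ℕ → K) (l : ℕ) :
    ∑ p ∈ antidiagonal (l + 1), g p.1 p.2 * c p.2 =
      g 0 (l + 1) * c (l + 1) + ∑ k ∈ range (l + 1), g (k + 1) (l - k) * c (l - k) := by
  rw [Nat.sum_antidiagonal_succ, Nat.sum_antidiagonal_eq_sum_range_succ_mk]

variable {g}

theorem triangularSol_spec (h00 : g 0 0 = 0) (hdiag : ∀ m, g 0 (m + 1) ≠ 0) (l : ℕ) :
    ∑ p ∈ antidiagonal l, g p.1 p.2 * triangularSol g p.2 = 0 := by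
  cases l with
  | zero => simp [h00]
  | succ l =>
    rw [sum_antidiagonal_succ_mul, triangularSol, mul_div_cancel₀ _ (hdiag l)]
    ring

theorem eq_triangularSol (hdiag : ∀ m, g 0 (m + 1) ≠ 0) {c : ℕ → K} (hc0 : c 0 = 1)
    (hc : ∀ l, ∑ p ∈ antidiagonal l, g p.1 p.2 * c p.2 = 0) : c = triangularSol g := by
  funext l
  induction l using Nat.strong_induction_on with
  | _ l ih =>
    cases l with
    | zero => rw [hc0, triangularSol]
    | succ l =>
      have hl := hc (l + 1)
      rw [sum_antidiagonal_succ_mul] at hl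
      have hprev : ∑ k ∈ range (l + 1), g (k + 1) (l - k) * c (l - k) =
          ∑ k ∈ range (l + 1), g (k + 1) (l - k) * triangularSol g (l - k) :=
        sum_congr rfl fun k _ => by rw [ih (l - k) (Nat.lt_succ_of_le (Nat.sub_le l k))]
      rw [triangularSol, eq_div_iff (hdiag l), ← hprev]
      linear_combination hl

theorem existsUnique_triangular_solution (h00 : g 0 0 = 0) (hdiag : ∀ m, g 0 (m + 1) ≠ 0) :
    ∃! c : ℕ → K, c 0 = 1 ∧ ∀ l, ∑ p ∈ antidiagonal l, g p.1 p.2 * c p.2 = 0 :=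
  ⟨triangularSol g, ⟨by rw [triangularSol], triangularSol_spec h00 hdiag⟩,
    fun _ hc => eq_triangularSol hdiag hc.1 hc.2⟩

end Triangular

theorem existsUnique_qDiff_solution (q : K) (n : ℕ) (a : ℕ → K⟦X⟧)
    (hchar : charValue n a q 0 0 = 0) (hnr : ∀ m, charValue n a q 0 (m + 1) ≠ 0) :
    ∃! f : K⟦X⟧, coeff 0 f = 1 ∧ ∑ i ∈ range (n + 1), a i * rescale (q ^ i) f = 0 := by
  obtain ⟨c, ⟨hc0, hc⟩, huniq⟩ := existsUnique_triangular_solution hchar hnr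
  have hsolves (f : K⟦X⟧) : ∑ i ∈ range (n + 1), a i * rescale (q ^ i) f = 0 ↔
      ∀ l, ∑ p ∈ antidiagonal l, charValue n a q p.1 p.2 * coeff p.2 f = 0 := by
    simp only [PowerSeries.ext_iff, coeff_sum_mul_rescale_pow, map_zero]
  refine ⟨mk c, ⟨by rw [coeff_mk, hc0], (hsolves _).2 fun l => by simpa only [coeff_mk] using hc l⟩,
    fun f ⟨hf0, hf⟩ => ?_⟩
  ext l
  rw [coeff_mk, ← huniq (fun m => coeff m f) ⟨hf0, (hsolves f).1 hf⟩]

open PowerSeries in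
theorem stmt_15_general (q : ℂ) (n : ℕ) (a : ℕ → PowerSeries ℂ)
    -- `F_0(1) = 0`, i.e. 1 is a root of the characteristic polynomial of slope 0:
    (hchar : ∑ i ∈ Finset.range (n + 1), PowerSeries.coeff (R := ℂ) 0 (a i) = 0)
    -- nonresonance: `F_0(q^m) ≠ 0` for all `m ≥ 1`:
    (hnr : ∀ m : ℕ, 1 ≤ m →
      ∑ i ∈ Finset.range (n + 1), PowerSeries.coeff (R := ℂ) 0 (a i) * q ^ (i * m) ≠ 0) :
    ∃! f : PowerSeries ℂ, PowerSeries.coeff (R := ℂ) 0 f = 1 ∧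
      ∑ i ∈ Finset.range (n + 1), a i * PowerSeries.rescale (q ^ i) f = 0 :=
  existsUnique_qDiff_solution q n a (by simpa [charValue] using hchar)
    fun m => hnr (m + 1) m.succ_pos

open PowerSeries in
theorem stmt_15 (q : ℂ) (hq : 1 < ‖q‖) (n : ℕ) (a : ℕ → PowerSeries ℂ)
    (ha0 : a 0 ≠ 0) (han : a n ≠ 0)
    -- `F_0(1) = 0`, i.e. 1 is a root of the characteristic polynomial of slope 0:
    (hchar : ∑ i ∈ Finset.range (n + 1), PowerSeries.coeff (R := ℂ) 0 (a i) = 0)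
    -- nonresonance: `F_0(q^m) ≠ 0` for all `m ≥ 1`:
    (hnr : ∀ m : ℕ, 1 ≤ m →
      ∑ i ∈ Finset.range (n + 1), PowerSeries.coeff (R := ℂ) 0 (a i) * q ^ (i * m) ≠ 0) :
    ∃! f : PowerSeries ℂ, PowerSeries.coeff (R := ℂ) 0 f = 1 ∧
      ∑ i ∈ Finset.range (n + 1), a i * PowerSeries.rescale (q ^ i) f = 0 :=
  stmt_15_general q n a hchar hnr
end

section
/- Under the hypotheses of the preceding statement, assume additionally there exist A > 0 with |F_0(q^l)| ≥ A|q|^{ln} for l ≥ 1, and B, C > 0 with |a_{i,j}| ≤ B C^j for all i,j and deg F_j ≤ n. Then the unique formal solution f with f(0)=1 satisfies |f_l| ≤ (C(D+1)/|q|^n)^l where D = (n+1)B/A; in particular f is a convergent power series (Adams' lemma, slope-0 case). -/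
/-!
Majorant method. Writing `R = C (D + 1) / |q|^n`, the recurrence isolates `F_0(q^l) f_l` as a
sum of `l` terms, each bounded by `(n + 1) B C^{l-m} |q|^{nm} R^m = A C^l D (D + 1)^m`. These
sum telescopically to `A C^l ((D + 1)^l - 1) ≤ A |q|^{ln} R^l`, while `|F_0(q^l)| ≥ A |q|^{ln}`.
-/

/-- `F_j(X) = Σ_{i=0}^n a_{i,j} X^i`, the polynomial of the `j`-th slice of the
Newton polygon of `P = Σ a_i σ_q^i`. -/
noncomputable def newtonSlice (n : ℕ) (a : ℕ → ℕ → ℂ) (j : ℕ) (x : ℂ) : ℂ :=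
  ∑ i ∈ Finset.range (n + 1), a i j * x ^ i

open Finset

lemma norm_newtonSlice_le {n : ℕ} {a : ℕ → ℕ → ℂ} {j : ℕ} {x : ℂ} {K : ℝ}
    (hx : 1 ≤ ‖x‖) (ha : ∀ i, ‖a i j‖ ≤ K) :
    ‖newtonSlice n a j x‖ ≤ (n + 1) * K * ‖x‖ ^ n :=
  calc ‖∑ i ∈ range (n + 1), a i j * x ^ i‖
      ≤ ∑ i ∈ range (n + 1), ‖a i j * x ^ i‖ := norm_sum_le _ _
    _ ≤ ∑ _i ∈ range (n + 1), K * ‖x‖ ^ n := by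
        refine sum_le_sum fun i hi => ?_
        rw [norm_mul, norm_pow]
        exact mul_le_mul (ha i) (pow_le_pow_right₀ hx (Nat.lt_succ_iff.mp (mem_range.mp hi)))
          (by positivity) ((norm_nonneg _).trans (ha i))
    _ = (n + 1) * K * ‖x‖ ^ n := by
        simp only [sum_const, card_range, nsmul_eq_mul]; push_cast; ring

lemma sum_geom_majorant_le {A K C ρ : ℝ} (hA : 0 < A) (hρ : 0 < ρ) (hC : 0 ≤ C) (l : ℕ) :
    ∑ m ∈ range l, K * C ^ (l - m) * ρ ^ m * (C * (K / A + 1) / ρ) ^ m ≤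
      A * ρ ^ l * (C * (K / A + 1) / ρ) ^ l := by
  set D := K / A with hD
  have hK : K = A * D := by rw [hD]; field_simp
  have hterm : ∀ m ∈ range l, K * C ^ (l - m) * ρ ^ m * (C * (D + 1) / ρ) ^ m =
      A * C ^ l * (D + 1) ^ m * D := fun m hm => by
    rw [hK, div_pow, mul_pow, ← pow_sub_mul_pow C (mem_range.mp hm).le]
    field_simp
  have htelescope : (∑ m ∈ range l, (D + 1) ^ m) * D = (D + 1) ^ l - 1 := by
    simpa using geom_sum_mul (D + 1) l
  calc ∑ m ∈ range l, K * C ^ (l - m) * ρ ^ m * (C * (D + 1) / ρ) ^ m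
      = A * C ^ l * ((∑ m ∈ range l, (D + 1) ^ m) * D) := by
        rw [sum_congr rfl hterm, ← sum_mul, ← mul_sum, mul_assoc]
    _ = A * C ^ l * (D + 1) ^ l - A * C ^ l := by rw [htelescope]; ring
    _ ≤ A * C ^ l * (D + 1) ^ l := sub_le_self _ (by positivity)
    _ = A * ρ ^ l * (C * (D + 1) / ρ) ^ l := by rw [div_pow, mul_pow]; field_simp

theorem norm_le_of_triangular_recurrence {c : ℕ → ℕ → ℂ} {f : ℕ → ℂ} {A K C ρ : ℝ}
    (hA : 0 < A) (hρ : 0 < ρ) (hC : 0 ≤ C) (hf0 : f 0 = 1)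
    (hrec : ∀ l, ∑ m ∈ range (l + 1), c l m * f m = 0)
    (hdiag : ∀ l, 1 ≤ l → A * ρ ^ l ≤ ‖c l l‖)
    (hoff : ∀ l m, m < l → ‖c l m‖ ≤ K * C ^ (l - m) * ρ ^ m) (l : ℕ) :
    ‖f l‖ ≤ (C * (K / A + 1) / ρ) ^ l := by
  set R := C * (K / A + 1) / ρ
  induction l using Nat.strong_induction_on with
  | _ l ih =>
  rcases Nat.eq_zero_or_pos l with rfl | hl
  · simp [hf0]
  have hsolve : c l l * f l = -∑ m ∈ range l, c l m * f m := by
    have h := hrec l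
    rw [sum_range_succ] at h
    linear_combination h
  have hbound : A * ρ ^ l * ‖f l‖ ≤ A * ρ ^ l * R ^ l :=
    calc A * ρ ^ l * ‖f l‖ ≤ ‖c l l‖ * ‖f l‖ :=
          mul_le_mul_of_nonneg_right (hdiag l hl) (norm_nonneg _)
      _ = ‖∑ m ∈ range l, c l m * f m‖ := by rw [← norm_mul, hsolve, norm_neg]
      _ ≤ ∑ m ∈ range l, ‖c l m * f m‖ := norm_sum_le _ _
      _ ≤ ∑ m ∈ range l, K * C ^ (l - m) * ρ ^ m * R ^ m := sum_le_sum fun m hm => by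
          have hml := mem_range.mp hm
          rw [norm_mul]
          exact mul_le_mul (hoff l m hml) (ih m hml) (norm_nonneg _)
            ((norm_nonneg _).trans (hoff l m hml))
      _ ≤ A * ρ ^ l * R ^ l := sum_geom_majorant_le hA hρ hC l
  exact le_of_mul_le_mul_left hbound (by positivity)

theorem stmt_16_general (q : ℂ) (hq : 1 < ‖q‖) (n : ℕ) (a : ℕ → ℕ → ℂ)
    (A : ℝ) (hA : 0 < A)
    (hlow : ∀ l : ℕ, 1 ≤ l → A * ‖q‖ ^ (l * n) ≤ ‖newtonSlice n a 0 (q ^ l)‖)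
    (B C : ℝ) (hC : 0 < C)
    (hcoef : ∀ i j : ℕ, ‖a i j‖ ≤ B * C ^ j)
    (f : ℕ → ℂ) (hf0 : f 0 = 1)
    (hrec : ∀ l : ℕ, ∑ m ∈ Finset.range (l + 1), newtonSlice n a (l - m) (q ^ m) * f m = 0) :
    ∀ l : ℕ, ‖f l‖ ≤ (C * ((n + 1) * B / A + 1) / ‖q‖ ^ n) ^ l := by
  refine norm_le_of_triangular_recurrence (c := fun l m => newtonSlice n a (l - m) (q ^ m))
    hA (by positivity) hC.le hf0 hrec (fun l hl => ?_) (fun l m _ => ?_)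
  · simpa only [Nat.sub_self, ← pow_mul, mul_comm n l] using hlow l hl
  · calc ‖newtonSlice n a (l - m) (q ^ m)‖ ≤ (n + 1) * (B * C ^ (l - m)) * ‖q ^ m‖ ^ n :=
          norm_newtonSlice_le (by rw [norm_pow]; exact one_le_pow₀ hq.le) (fun i => hcoef i _)
      _ = (n + 1) * B * C ^ (l - m) * (‖q‖ ^ n) ^ m := by
          rw [norm_pow, ← pow_mul, ← pow_mul, mul_comm m n]; ring

theorem stmt_16 (q : ℂ) (hq : 1 < ‖q‖) (n : ℕ) (a : ℕ → ℕ → ℂ)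
    (hchar : newtonSlice n a 0 1 = 0)
    (hnr : ∀ m : ℕ, 1 ≤ m → newtonSlice n a 0 (q ^ m) ≠ 0)
    (A : ℝ) (hA : 0 < A)
    (hlow : ∀ l : ℕ, 1 ≤ l → A * ‖q‖ ^ (l * n) ≤ ‖newtonSlice n a 0 (q ^ l)‖)
    (B C : ℝ) (hB : 0 < B) (hC : 0 < C)
    (hcoef : ∀ i j : ℕ, ‖a i j‖ ≤ B * C ^ j)
    (f : ℕ → ℂ) (hf0 : f 0 = 1)
    (hrec : ∀ l : ℕ, ∑ m ∈ Finset.range (l + 1), newtonSlice n a (l - m) (q ^ m) * f m = 0) :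
    ∀ l : ℕ, ‖f l‖ ≤ (C * ((n + 1) * B / A + 1) / ‖q‖ ^ n) ^ l :=
  stmt_16_general q hq n a A hA hlow B C hC hcoef f hf0 hrec
end

section
/- Let q ∈ ℂ with |q|>1, μ a positive integer, A_0 ∈ GL_n(ℂ). Then the map X ↦ σ_q X - z^μ A_0 X is bijective on ℂ((z))^n, and for convergent Y the unique formal solution X = Σ_{k≥1} q^{-μk(k+1)/2} z^{μk} A_0^k σ_q^{-k-1} Y converges wherever Y does. -/
open Matrix

section ShiftRecurrence

variable {K ι : Type*} [Field K] [Fintype ι] {c : ℤ → K} {A : Matrix ι ι K} {μ N : ℤ}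

theorem eq_zero_of_smul_eq_mulVec_shift (hc : ∀ m, c m ≠ 0) (hμ : 0 < μ) {d : ℤ → ι → K}
    (hd : ∀ m < N, d m = 0) (hrec : ∀ m, c m • d m = A *ᵥ d (m - μ)) : d = 0 := by
  have hbelow : ∀ k : ℕ, ∀ m < N + k * μ, d m = 0 := by
    intro k
    induction k with
    | zero => simpa using hd
    | succ k ih =>
      intro m hm
      have hprev : d (m - μ) = 0 := ih _ (by push_cast at hm; linarith)
      have h := hrec m
      rw [hprev, mulVec_zero] at h
      exact (smul_eq_zero.mp h).resolve_left (hc m)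
  funext m
  have hk : m < N + ((m - N).toNat + 1 : ℕ) * μ := by
    push_cast
    nlinarith [Int.self_le_toNat (m - N)]
  exact hbelow _ m hk

variable (c A μ N) in
/-- The guard `0 < μ` only serves termination. -/
noncomputable def shiftSolve (y : ℤ → ι → K) (m : ℤ) : ι → K :=
  if N ≤ m ∧ 0 < μ then (c m)⁻¹ • (y m + A *ᵥ shiftSolve y (m - μ)) else 0
termination_by (m - N + 1).toNat
decreasing_by omega

theorem shiftSolve_of_lt {y : ℤ → ι → K} {m : ℤ} (hm : m < N) : shiftSolve c A μ N y m = 0 := by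
  rw [shiftSolve, if_neg (by omega)]

theorem smul_shiftSolve (hc : ∀ m, c m ≠ 0) (hμ : 0 < μ) {y : ℤ → ι → K} (hy : ∀ m < N, y m = 0)
    (m : ℤ) : c m • shiftSolve c A μ N y m = y m + A *ᵥ shiftSolve c A μ N y (m - μ) := by
  rcases lt_or_ge m N with hm | hm
  · rw [shiftSolve_of_lt hm, shiftSolve_of_lt (by omega), hy m hm, mulVec_zero, smul_zero, add_zero]
  · rw [shiftSolve, if_pos ⟨hm, hμ⟩, smul_inv_smul₀ (hc m)]

end ShiftRecurrence

theorem summable_of_le_add_mul_shift {s t : ℕ → ℝ} {ε : ℝ} {k M : ℕ} (hs : ∀ m, 0 ≤ s m)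
    (ht0 : ∀ m, 0 ≤ t m) (ht : Summable t) (hε0 : 0 ≤ ε) (hε : ε < 1) (hkM : k ≤ M)
    (h : ∀ m, M ≤ m → s m ≤ t m + ε * s (m - k)) : Summable s := by
  refine summable_of_sum_range_le hs (c := (∑ m ∈ Finset.range M, s m + ∑' m, t m) / (1 - ε))
    fun K => (le_div_iff₀ (by linarith)).mpr ?_
  have hS : 0 ≤ ∑ m ∈ Finset.range K, s m := Finset.sum_nonneg fun m _ => hs m
  have hT : 0 ≤ ∑' m, t m := tsum_nonneg ht0
  suffices ∑ m ∈ Finset.range K, s m ≤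
      ∑ m ∈ Finset.range M, s m + ∑' m, t m + ε * ∑ m ∈ Finset.range K, s m by nlinarith
  rcases le_total K M with hKM | hMK
  · have := Finset.sum_le_sum_of_subset_of_nonneg (Finset.range_subset_range.mpr hKM)
      fun m _ _ => hs m
    nlinarith
  have hshift : ∑ m ∈ Finset.Ico M K, s (m - k) ≤ ∑ m ∈ Finset.range K, s m := by
    rw [← Finset.sum_image (g := (· - k)) fun a ha b hb hab => by
      simp only [Finset.coe_Ico, Set.mem_Ico] at ha hb hab; omega]
    refine Finset.sum_le_sum_of_subset_of_nonneg (fun j hj => ?_) fun m _ _ => hs m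
    obtain ⟨m, hm, rfl⟩ := Finset.mem_image.mp hj
    simp only [Finset.mem_Ico, Finset.mem_range] at hm ⊢
    omega
  calc ∑ m ∈ Finset.range K, s m = ∑ m ∈ Finset.range M, s m + ∑ m ∈ Finset.Ico M K, s m :=
        (Finset.sum_range_add_sum_Ico s hMK).symm
    _ ≤ ∑ m ∈ Finset.range M, s m +
          (∑ m ∈ Finset.Ico M K, t m + ε * ∑ m ∈ Finset.Ico M K, s (m - k)) := by
        rw [Finset.mul_sum, ← Finset.sum_add_distrib]
        gcongr with m hm
        exact h m (Finset.mem_Ico.mp hm).1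
    _ ≤ _ := by
        linarith [ht.sum_le_tsum (Finset.Ico M K) fun m _ => ht0 m,
          mul_le_mul_of_nonneg_left hshift hε0]

theorem summable_mul_pow_of_pow_mul_le {a b : ℕ → ℝ} {ρ C r : ℝ} {k : ℕ} (hρ : 1 < ρ)
    (hr : 0 ≤ r) (ha : ∀ m, 0 ≤ a m) (hb0 : ∀ m, 0 ≤ b m) (hb : Summable fun m => b m * r ^ m)
    (h : ∀ m, k ≤ m → ρ ^ m * a m ≤ b m + C * a (m - k)) :
    Summable fun m => a m * r ^ m := by
  have hρ0 : 0 < ρ := one_pos.trans hρ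
  obtain ⟨M, hM⟩ := Filter.eventually_atTop.mp <|
    ((tendsto_pow_atTop_nhds_zero_of_lt_one (inv_nonneg.mpr hρ0.le)
      (inv_lt_one_of_one_lt₀ hρ)).mul_const (C * r ^ k)).eventually
      (ge_mem_nhds (by norm_num : (0 : ℝ) * (C * r ^ k) < 1 / 2))
  refine summable_of_le_add_mul_shift (M := max M k) (ε := 1 / 2)
    (fun m => mul_nonneg (ha m) (pow_nonneg hr m)) (fun m => mul_nonneg (hb0 m) (pow_nonneg hr m))
    hb (by norm_num) (by norm_num) (le_max_right _ _) fun m hm => ?_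
  have hkm : k ≤ m := (le_max_right _ _).trans hm
  have hρm : ρ⁻¹ ^ m ≤ 1 := pow_le_one₀ (inv_nonneg.mpr hρ0.le) (inv_le_one_of_one_le₀ hρ.le)
  calc a m * r ^ m = ρ⁻¹ ^ m * (ρ ^ m * a m) * r ^ m := by
        rw [inv_pow, inv_mul_cancel_left₀ (pow_ne_zero m hρ0.ne')]
    _ ≤ ρ⁻¹ ^ m * (b m + C * a (m - k)) * r ^ m := by gcongr; exact h m hkm
    _ = ρ⁻¹ ^ m * (b m * r ^ m) + ρ⁻¹ ^ m * (C * r ^ k) * (a (m - k) * r ^ (m - k)) := by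
        rw [← pow_sub_mul_pow r hkm]; ring
    _ ≤ b m * r ^ m + 1 / 2 * (a (m - k) * r ^ (m - k)) :=
        add_le_add (mul_le_of_le_one_left (mul_nonneg (hb0 m) (pow_nonneg hr m)) hρm)
          (mul_le_mul_of_nonneg_right (hM m ((le_max_left _ _).trans hm))
            (mul_nonneg (ha _) (pow_nonneg hr _)))

theorem summable_norm_mul_of_forall_summable {ι E : Type*} [Fintype ι] [SeminormedAddCommGroup E]
    {v : ℕ → ι → E} {w : ℕ → ℝ} (hw : ∀ m, 0 ≤ w m) (h : ∀ i, Summable fun m => ‖v m i‖ * w m) :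
    Summable fun m => ‖v m‖ * w m := by
  refine (summable_sum (s := Finset.univ) fun i _ => h i).of_nonneg_of_le
    (fun m => mul_nonneg (norm_nonneg _) (hw m)) fun m => ?_
  rw [← Finset.sum_mul]
  exact mul_le_mul_of_nonneg_right ((pi_norm_le_iff_of_nonneg (by positivity)).mpr fun i =>
    Finset.single_le_sum (fun j _ => norm_nonneg (v m j)) (Finset.mem_univ i)) (hw m)

section LaurentVectors

variable {R ι : Type*} [Zero R]

def coeffVec (X : ι → LaurentSeries R) (m : ℤ) : ι → R := fun i => (X i).coeff m

theorem coeffVec_injective : Function.Injective (coeffVec : (ι → LaurentSeries R) → ℤ → ι → R) :=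
  fun _ _ h => funext fun i => HahnSeries.ext <| funext fun m => congrFun (congrFun h m) i

theorem exists_coeffVec_eq_zero_of_lt [Finite ι] (X : ι → LaurentSeries R) :
    ∃ N : ℤ, ∀ m < N, coeffVec X m = 0 := by
  obtain ⟨N, hN⟩ := (Set.finite_range fun i => (X i).order).bddBelow
  exact ⟨N, fun m hm => funext fun i =>
    HahnSeries.coeff_eq_zero_of_lt_order (hm.trans_le (hN (Set.mem_range_self i)))⟩

theorem exists_coeffVec_eq (x : ℤ → ι → R) {N : ℤ} (hx : ∀ m < N, x m = 0) :
    ∃ X : ι → LaurentSeries R, coeffVec X = x := by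
  have hbdd : ∀ i, BddBelow (Function.support fun m => x m i) := fun i =>
    ⟨N, fun m hm => not_lt.mp fun hlt => hm (congrFun (hx m hlt) i)⟩
  exact ⟨fun i => HahnSeries.ofSuppBddBelow _ (hbdd i), rfl⟩

end LaurentVectors

noncomputable def qDiffOp {ι : Type*} [Fintype ι] (q : ℂ) (μ : ℤ) (A : Matrix ι ι ℂ)
    (X : ι → LaurentSeries ℂ) : ι → LaurentSeries ℂ :=
  fun i => sigmaq q (X i) -
    HahnSeries.single μ (1 : ℂ) * ∑ j, HahnSeries.single (0 : ℤ) (A i j) * X j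

theorem coeffVec_qDiffOp {ι : Type*} [Fintype ι] (q : ℂ) (μ : ℤ) (A : Matrix ι ι ℂ)
    (X : ι → LaurentSeries ℂ) (m : ℤ) :
    coeffVec (qDiffOp q μ A X) m = q ^ m • coeffVec X m - A *ᵥ coeffVec X (m - μ) := by
  funext i
  simp [qDiffOp, coeffVec, sigmaq, HahnSeries.coeff_single_mul, HahnSeries.coeff_sum, mulVec,
    dotProduct]

section QDiffOp

variable {ι : Type*} [Fintype ι] {q : ℂ} {μ : ℤ} {A : Matrix ι ι ℂ}

theorem qDiffOp_eq_iff {X Y : ι → LaurentSeries ℂ} :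
    qDiffOp q μ A X = Y ↔ ∀ m, q ^ m • coeffVec X m = coeffVec Y m + A *ᵥ coeffVec X (m - μ) := by
  rw [← coeffVec_injective.eq_iff, funext_iff]
  exact forall_congr' fun m => by rw [coeffVec_qDiffOp, sub_eq_iff_eq_add]

theorem qDiffOp_injective (hq : q ≠ 0) (hμ : 0 < μ) : Function.Injective (qDiffOp q μ A) := by
  intro X X' h
  obtain ⟨N, hN⟩ := exists_coeffVec_eq_zero_of_lt X
  obtain ⟨N', hN'⟩ := exists_coeffVec_eq_zero_of_lt X'
  have hrec : ∀ m, q ^ m • (coeffVec X - coeffVec X') m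
      = A *ᵥ (coeffVec X - coeffVec X') (m - μ) := fun m => by
    have hm := congrArg (coeffVec · m) h
    simp only [coeffVec_qDiffOp] at hm
    rw [Pi.sub_apply, Pi.sub_apply, smul_sub, mulVec_sub]
    exact sub_eq_sub_iff_sub_eq_sub.mp hm
  have hd := eq_zero_of_smul_eq_mulVec_shift (N := min N N') (fun m => zpow_ne_zero m hq) hμ
    (fun m hm => by
      simp [hN m (hm.trans_le (min_le_left _ _)), hN' m (hm.trans_le (min_le_right _ _))]) hrec
  exact coeffVec_injective (sub_eq_zero.mp hd)

theorem qDiffOp_surjective (hq : q ≠ 0) (hμ : 0 < μ) : Function.Surjective (qDiffOp q μ A) := by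
  intro Y
  obtain ⟨N, hN⟩ := exists_coeffVec_eq_zero_of_lt Y
  obtain ⟨X, hX⟩ := exists_coeffVec_eq (shiftSolve (q ^ ·) A μ N (coeffVec Y))
    fun m hm => shiftSolve_of_lt hm
  exact ⟨X, qDiffOp_eq_iff.mpr fun m => by
    rw [hX]; exact smul_shiftSolve (fun m => zpow_ne_zero m hq) hμ hN m⟩

attribute [local instance] Matrix.linftyOpNormedAddCommGroup in
theorem summable_norm_coeffVec_mul_pow_of_qDiffOp_eq (hq : 1 < ‖q‖) (hμ : 0 < μ)
    {X Y : ι → LaurentSeries ℂ} (h : qDiffOp q μ A X = Y) {r : ℝ} (hr : 0 ≤ r)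
    (hY : Summable fun m : ℕ => ‖coeffVec Y m‖ * r ^ m) :
    Summable fun m : ℕ => ‖coeffVec X m‖ * r ^ m := by
  refine summable_mul_pow_of_pow_mul_le (k := μ.toNat) (C := ‖A‖) hq hr (fun _ => norm_nonneg _)
    (fun _ => norm_nonneg _) hY fun m hm => ?_
  have hshift : (m : ℤ) - μ = ((m - μ.toNat : ℕ) : ℤ) := by omega
  calc ‖q‖ ^ m * ‖coeffVec X m‖ = ‖q ^ (m : ℤ) • coeffVec X m‖ := by
        rw [norm_smul, norm_zpow, zpow_natCast]
    _ = ‖coeffVec Y m + A *ᵥ coeffVec X (m - μ)‖ := by rw [qDiffOp_eq_iff.mp h]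
    _ ≤ ‖coeffVec Y m‖ + ‖A‖ * ‖coeffVec X (m - μ)‖ :=
        (norm_add_le _ _).trans (by gcongr; exact linfty_opNorm_mulVec A _)
    _ = ‖coeffVec Y m‖ + ‖A‖ * ‖coeffVec X (m - μ.toNat : ℕ)‖ := by rw [hshift]

end QDiffOp

theorem stmt_17_general (q : ℂ) (hq : 1 < ‖q‖) (μ : ℤ) (hμ : 0 < μ) (n : ℕ)
    (A0 : Matrix (Fin n) (Fin n) ℂ) :
    Function.Bijective (fun X : Fin n → LaurentSeries ℂ => fun i =>
      sigmaq q (X i) - HahnSeries.single μ (1 : ℂ) * ∑ j, HahnSeries.single (0 : ℤ) (A0 i j) * X j) ∧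
    ∀ X Y : Fin n → LaurentSeries ℂ,
      (∀ i, sigmaq q (X i) -
        HahnSeries.single μ (1 : ℂ) * ∑ j, HahnSeries.single (0 : ℤ) (A0 i j) * X j = Y i) →
      ∀ r : ℝ, 0 < r →
        (∀ i, Summable fun m : ℕ => ‖(Y i).coeff (m : ℤ)‖ * r ^ m) →
        (∀ i, Summable fun m : ℕ => ‖(X i).coeff (m : ℤ)‖ * r ^ m) := by
  have hq0 : q ≠ 0 := norm_pos_iff.mp (one_pos.trans hq)
  refine ⟨⟨qDiffOp_injective hq0 hμ, qDiffOp_surjective hq0 hμ⟩, fun X Y hXY r hr hY i => ?_⟩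
  have hX := summable_norm_coeffVec_mul_pow_of_qDiffOp_eq (A := A0) hq hμ (funext hXY) hr.le
    (summable_norm_mul_of_forall_summable (fun m => pow_nonneg hr.le m) hY)
  exact hX.of_nonneg_of_le (fun m => by positivity)
    fun m => mul_le_mul_of_nonneg_right (norm_le_pi_norm (coeffVec X m) i) (pow_nonneg hr.le m)

theorem stmt_17 (q : ℂ) (hq : 1 < ‖q‖) (μ : ℤ) (hμ : 0 < μ) (n : ℕ)
    (A0 : Matrix (Fin n) (Fin n) ℂ) (hA0 : IsUnit A0.det) :
    Function.Bijective (fun X : Fin n → LaurentSeries ℂ => fun i =>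
      sigmaq q (X i) - HahnSeries.single μ (1 : ℂ) * ∑ j, HahnSeries.single (0 : ℤ) (A0 i j) * X j) ∧
    ∀ X Y : Fin n → LaurentSeries ℂ,
      (∀ i, sigmaq q (X i) -
        HahnSeries.single μ (1 : ℂ) * ∑ j, HahnSeries.single (0 : ℤ) (A0 i j) * X j = Y i) →
      ∀ r : ℝ, 0 < r →
        (∀ i, Summable fun m : ℕ => ‖(Y i).coeff (m : ℤ)‖ * r ^ m) →
        (∀ i, Summable fun m : ℕ => ‖(X i).coeff (m : ℤ)‖ * r ^ m) :=
  stmt_17_general q hq μ hμ n A0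
end
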